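/- Let T : ℂ[z] → ℂ be a linear functional whose formal Stieltjes transform F_T equals R/S in ℂ((x^{-1})) for coprime polynomials R, S with S monic. Then the ideal I_T = { p : T(p·q) = 0 for all q } is generated by S. -/

import Mathlib

/-- The polynomial `S(x)` viewed in `ℂ((x⁻¹))`, realized as the Laurent series field
`LaurentSeries ℂ = ℂ((X))` with `X = x⁻¹`, by evaluating `S` at `X⁻¹`. -/
noncomputable def polyLS (S : Polynomial ℂ) : LaurentSeries ℂ :=
  Polynomial.aeval ((PowerSeries.X : PowerSeries ℂ) : LaurentSeries ℂ)⁻¹ S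

/-- The series `∑_{n≥0} a n · x^{-n-1}`, i.e. `∑ a n · X^{n+1}` with `X = x⁻¹`. -/
noncomputable def seqLS (a : ℕ → ℂ) : LaurentSeries ℂ :=
  ((PowerSeries.mk a : PowerSeries ℂ) : LaurentSeries ℂ) *
    ((PowerSeries.X : PowerSeries ℂ) : LaurentSeries ℂ)

/-- The formal Stieltjes transform `F_T(x) = ∑_{n≥0} x^{-n-1} T(z^n)` of a linear
functional `T` on `ℂ[z]`. -/
noncomputable def stieltjes (T : Polynomial ℂ →ₗ[ℂ] ℂ) : LaurentSeries ℂ :=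
  seqLS fun n => T (Polynomial.X ^ n)

open HahnSeries Polynomial

section Aux

noncomputable abbrev YLS : LaurentSeries ℂ := ((PowerSeries.X : PowerSeries ℂ) : LaurentSeries ℂ)

lemma Y_eq : YLS = single (1 : ℤ) (1 : ℂ) := PowerSeries.coe_X

lemma Yinv : YLS⁻¹ = single (-1 : ℤ) (1 : ℂ) := by
  rw [Y_eq]
  refine inv_eq_of_mul_eq_one_right ?_
  rw [single_mul_single, one_mul]
  norm_num [single_zero_one]

lemma Yinv_pow (n : ℕ) : YLS⁻¹ ^ n = single (-(n : ℤ)) (1 : ℂ) := by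
  rw [Yinv, single_pow, one_pow]
  congr 1
  simp

/-- coeff as an AddMonoidHom -/
noncomputable def coeffHom (k : ℤ) : LaurentSeries ℂ →+ ℂ where
  toFun x := x.coeff k
  map_zero' := rfl
  map_add' _ _ := rfl

lemma polyLS_eq_sum (p : Polynomial ℂ) :
    polyLS p = p.sum fun n a => single (-(n : ℤ)) a := by
  rw [polyLS, Polynomial.aeval_def, Polynomial.eval₂_eq_sum]
  refine Finset.sum_congr rfl fun n _ => ?_
  show (algebraMap ℂ (HahnSeries ℤ ℂ)) _ * YLS⁻¹ ^ n = _
  rw [Yinv_pow, HahnSeries.algebraMap_apply']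
  show (ofPowerSeries ℤ ℂ) (PowerSeries.C (p.coeff n)) * _ = _
  rw [ofPowerSeries_C, HahnSeries.C_apply, single_mul_single, zero_add, mul_one]

lemma polyLS_coeff_neg (p : Polynomial ℂ) (n : ℕ) :
    (polyLS p).coeff (-(n : ℤ)) = p.coeff n := by
  rw [polyLS_eq_sum, Polynomial.sum]
  have : (∑ m ∈ p.support, single (-(m:ℤ)) (p.coeff m)).coeff (-(n:ℤ))
      = ∑ m ∈ p.support, (single (-(m:ℤ)) (p.coeff m)).coeff (-(n:ℤ)) :=
    map_sum (coeffHom (-(n:ℤ))) _ _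
  rw [this]
  rw [Finset.sum_eq_single n (fun m _ hm => by rw [coeff_single_of_ne]; omega)
    (fun hn => by simp [Polynomial.notMem_support_iff.mp hn])]
  simp

lemma polyLS_coeff_pos (p : Polynomial ℂ) (k : ℤ) (hk : 0 < k) :
    (polyLS p).coeff k = 0 := by
  rw [polyLS_eq_sum, Polynomial.sum]
  have : (∑ m ∈ p.support, single (-(m:ℤ)) (p.coeff m)).coeff k
      = ∑ m ∈ p.support, (single (-(m:ℤ)) (p.coeff m)).coeff k :=
    map_sum (coeffHom k) _ _
  rw [this]
  refine Finset.sum_eq_zero fun m _ => ?_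
  rw [coeff_single_of_ne]
  omega

lemma polyLS_zero : polyLS 0 = 0 := map_zero (Polynomial.aeval _)

lemma polyLS_add (p q : Polynomial ℂ) : polyLS (p + q) = polyLS p + polyLS q :=
  map_add (Polynomial.aeval _) p q

lemma polyLS_mul (p q : Polynomial ℂ) : polyLS (p * q) = polyLS p * polyLS q :=
  map_mul (Polynomial.aeval _) p q

lemma polyLS_X : polyLS Polynomial.X = YLS⁻¹ := Polynomial.aeval_X _

lemma polyLS_injective : Function.Injective polyLS := by
  intro p q h
  ext n
  rw [← polyLS_coeff_neg p n, ← polyLS_coeff_neg q n, h]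

lemma seqLS_coeff_succ (a : ℕ → ℂ) (n : ℕ) : (seqLS a).coeff ((n : ℤ) + 1) = a n := by
  rw [seqLS, show ((PowerSeries.X : PowerSeries ℂ) : LaurentSeries ℂ) = single (1:ℤ) (1:ℂ) from ofPowerSeries_X,
    mul_comm, coeff_single_mul_add, one_mul, LaurentSeries.coeff_coe_powerSeries, PowerSeries.coeff_mk]

lemma seqLS_coeff_nonpos (a : ℕ → ℂ) (k : ℤ) (hk : k ≤ 0) : (seqLS a).coeff k = 0 := by
  rw [seqLS, show ((PowerSeries.X : PowerSeries ℂ) : LaurentSeries ℂ) = single (1:ℤ) (1:ℂ) from ofPowerSeries_X,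
    mul_comm, show k = (k - 1) + 1 by ring, coeff_single_mul_add, one_mul,
    PowerSeries.coeff_coe, if_pos (by omega)]

lemma seqLS_eq_zero_iff (a : ℕ → ℂ) : seqLS a = 0 ↔ ∀ n, a n = 0 := by
  constructor
  · intro h n
    rw [← seqLS_coeff_succ a n, h, HahnSeries.coeff_zero]
  · intro h
    have : a = fun _ => 0 := funext h
    subst this
    simp [seqLS, show (PowerSeries.mk fun _ => (0:ℂ)) = 0 from by ext n; simp]

lemma mk_shift (b : ℕ → ℂ) :
    (PowerSeries.mk b : PowerSeries ℂ)
      = PowerSeries.C (b 0) + PowerSeries.X * PowerSeries.mk (fun n => b (n + 1)) := by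
  ext n
  cases n with
  | zero => simp
  | succ n => simp [PowerSeries.coeff_succ_X_mul]

lemma coe_mk_shift (b : ℕ → ℂ) :
    ((PowerSeries.mk b : PowerSeries ℂ) : LaurentSeries ℂ)
      = polyLS (Polynomial.C (b 0)) + seqLS (fun n => b (n + 1)) := by
  rw [mk_shift b, PowerSeries.coe_add, PowerSeries.coe_mul]
  congr 1
  · rw [PowerSeries.coe_C, polyLS_eq_sum]
    by_cases h : b 0 = 0
    · simp [h, Polynomial.sum]
    · rw [Polynomial.sum_C_index] <;> simp [HahnSeries.C_apply]
  · rw [seqLS, mul_comm]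

lemma seqLS_add (a b : ℕ → ℂ) : seqLS (fun n => a n + b n) = seqLS a + seqLS b := by
  have h1 : (PowerSeries.mk fun n => a n + b n) = PowerSeries.mk a + PowerSeries.mk b := by
    ext n; simp
  rw [seqLS, seqLS, seqLS, h1, PowerSeries.coe_add, add_mul]

lemma seqLS_const_mul (c : ℂ) (a : ℕ → ℂ) :
    seqLS (fun n => c * a n) = algebraMap ℂ (LaurentSeries ℂ) c * seqLS a := by
  have h1 : (PowerSeries.mk fun n => c * a n) = PowerSeries.C c * PowerSeries.mk a := by
    ext n; simp
  rw [seqLS, seqLS, h1, PowerSeries.coe_mul, HahnSeries.algebraMap_apply',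
    PowerSeries.algebraMap_apply, Algebra.algebraMap_self, RingHom.id_apply, mul_assoc]

/-- KEY LEMMA: multiplying the Stieltjes transform by a polynomial (in `x = X⁻¹`)
splits into a polynomial part plus the Stieltjes transform of `q ↦ T (p * q)`. -/
lemma key (T : Polynomial ℂ →ₗ[ℂ] ℂ) (p : Polynomial ℂ) :
    ∃ c : Polynomial ℂ,
      polyLS p * stieltjes T = polyLS c + seqLS (fun n => T (p * Polynomial.X ^ n)) := by
  induction p using Polynomial.induction_on' with
  | add p q hp hq =>
    obtain ⟨c, hc⟩ := hp
    obtain ⟨d, hd⟩ := hq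
    refine ⟨c + d, ?_⟩
    have : (fun n => T ((p + q) * Polynomial.X ^ n))
        = fun n => T (p * Polynomial.X ^ n) + T (q * Polynomial.X ^ n) := by
      funext n; rw [add_mul, map_add]
    rw [this, seqLS_add, polyLS_add, add_mul, hc, hd, polyLS_add]
    ring
  | monomial n a =>
    induction n with
    | zero =>
      refine ⟨0, ?_⟩
      have h1 : (Polynomial.monomial 0 a : Polynomial ℂ) = Polynomial.C a := by
        rw [Polynomial.monomial_zero_left]
      have h2 : (fun n => T (Polynomial.monomial 0 a * Polynomial.X ^ n))
          = fun n => a * T (Polynomial.X ^ n) := by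
        funext n
        rw [h1, ← Polynomial.smul_eq_C_mul, map_smul, smul_eq_mul]
      have h3 : polyLS ((Polynomial.monomial 0) a) = algebraMap ℂ (LaurentSeries ℂ) a := by
        rw [h1, polyLS]; exact Polynomial.aeval_C _ _
      rw [h2, seqLS_const_mul, h3, polyLS_zero, zero_add, stieltjes]
    | succ n ih =>
      obtain ⟨c, hc⟩ := ih
      set b : ℕ → ℂ := fun k => T (Polynomial.monomial n a * Polynomial.X ^ k) with hb
      refine ⟨c * Polynomial.X + Polynomial.C (b 0), ?_⟩
      have hmon : (Polynomial.monomial (n+1) a : Polynomial ℂ)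
          = Polynomial.monomial n a * Polynomial.X :=
        (Polynomial.monomial_mul_X n a).symm
      have hYne : ((PowerSeries.X : PowerSeries ℂ) : LaurentSeries ℂ) ≠ 0 := by
        rw [show ((PowerSeries.X : PowerSeries ℂ) : LaurentSeries ℂ) = single (1:ℤ) (1:ℂ) from ofPowerSeries_X]
        exact HahnSeries.single_ne_zero one_ne_zero
      have hseq : seqLS b * YLS⁻¹ = ((PowerSeries.mk b : PowerSeries ℂ) : LaurentSeries ℂ) := by
        rw [seqLS, mul_assoc, mul_inv_cancel₀ hYne, mul_one]
      have hfun : (fun k => b (k + 1))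
          = fun k => T (Polynomial.monomial (n+1) a * Polynomial.X ^ k) := by
        funext k
        show T (Polynomial.monomial n a * Polynomial.X ^ (k+1))
            = T (Polynomial.monomial (n+1) a * Polynomial.X ^ k)
        rw [hmon]
        congr 1
        ring
      calc polyLS (Polynomial.monomial (n+1) a) * stieltjes T
          = polyLS (Polynomial.monomial n a) * stieltjes T * YLS⁻¹ := by
            rw [hmon, polyLS_mul, polyLS_X]; ring
        _ = polyLS c * YLS⁻¹ + seqLS b * YLS⁻¹ := by rw [hc]; ring
        _ = polyLS (c * Polynomial.X) + (polyLS (Polynomial.C (b 0)) + seqLS fun k => b (k + 1)) := by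
            rw [polyLS_mul, polyLS_X, hseq, coe_mk_shift]
        _ = polyLS (c * Polynomial.X + Polynomial.C (b 0))
              + seqLS fun k => T (Polynomial.monomial (n+1) a * Polynomial.X ^ k) := by
            rw [polyLS_add, hfun]; ring

lemma polyLS_sub (p q : Polynomial ℂ) : polyLS (p - q) = polyLS p - polyLS q :=
  map_sub (Polynomial.aeval _) p q

lemma T_vanish (T : Polynomial ℂ →ₗ[ℂ] ℂ) (p : Polynomial ℂ)
    (h : ∀ n, T (p * Polynomial.X ^ n) = 0) (q : Polynomial ℂ) : T (p * q) = 0 := by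
  induction q using Polynomial.induction_on' with
  | add f g hf hg => rw [mul_add, map_add, hf, hg, add_zero]
  | monomial n a =>
    have : p * Polynomial.monomial n a = a • (p * Polynomial.X ^ n) := by
      rw [Polynomial.smul_eq_C_mul, ← Polynomial.C_mul_X_pow_eq_monomial]; ring
    rw [this, map_smul, h n, smul_zero]

end Aux

/-- if `F_T = R/S` in `ℂ((x⁻¹))` with `R, S` coprime and `S` monic, then
`I_T = { p : T(p·q) = 0 for all q }` is the ideal generated by `S`. -/
theorem statement3 (T : Polynomial ℂ →ₗ[ℂ] ℂ) (R S : Polynomial ℂ)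
    (hco : IsCoprime R S) (hmonic : S.Monic)
    (hF : stieltjes T = polyLS R / polyLS S) :
    ∀ p : Polynomial ℂ,
      (∀ q : Polynomial ℂ, T (p * q) = 0) ↔ p ∈ Ideal.span ({S} : Set (Polynomial ℂ)) := by
  have hSne : polyLS S ≠ 0 := fun h0 =>
    hmonic.ne_zero (polyLS_injective (h0.trans polyLS_zero.symm))
  intro p
  rw [Ideal.mem_span_singleton]
  constructor
  · intro h
    obtain ⟨c, hc⟩ := key T p
    have hz : seqLS (fun n => T (p * Polynomial.X ^ n)) = 0 :=
      (seqLS_eq_zero_iff _).2 fun n => h _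
    rw [hz, add_zero, hF, ← mul_div_assoc, div_eq_iff hSne] at hc
    have heq : p * R = c * S :=
      polyLS_injective (by rw [polyLS_mul, polyLS_mul]; exact hc)
    exact hco.symm.dvd_of_dvd_mul_right ⟨c, by rw [heq]; ring⟩
  · rintro ⟨d, rfl⟩
    obtain ⟨c, hc⟩ := key T (S * d)
    have h1 : polyLS (S * d) * stieltjes T = polyLS (d * R) := by
      rw [hF, polyLS_mul]
      field_simp
      rw [polyLS_mul]
    rw [h1] at hc
    have h2 : seqLS (fun n => T (S * d * Polynomial.X ^ n)) = polyLS (d * R - c) := by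
      rw [polyLS_sub]
      exact eq_sub_of_add_eq (by rw [add_comm]; exact hc.symm)
    have h3 : ∀ n, T (S * d * Polynomial.X ^ n) = 0 := by
      intro n
      have := congrArg (fun x : LaurentSeries ℂ => x.coeff ((n : ℤ) + 1)) h2
      simpa [seqLS_coeff_succ, polyLS_coeff_pos _ _ (by omega : (0:ℤ) < (n:ℤ)+1)] using this
    exact T_vanish T _ h3
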